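/- For λ ∈ ℂ, there exists a nonzero bounded sequence v = (v(n))_{n≥0} with Σ_m s(n,m) v(m) = λ v(n) for every n ≥ 0 if and only if λ ∈ E. In other words, the point spectrum of the transition operator S acting on l^∞ equals the fibered filled Julia set E. -/

import Mathlib

/-!
Every eigenvector of `S` is determined by its value at `0`: row `n` of `S v = λ v` expresses
`p_1 ⋯ p_{ζ_n} v(n+1)` through values of `v` at indices `≤ n`. For every `λ` the sequence
`v_λ(n) = ∏_r ι_λ(r) ^ a_r(n)` is an eigenvector: in row `n` the three kinds of neighbours
`n + 1`, `n`, `n - (q_r - 1)` share the digits of `n` beyond `ζ_n`, and what is left is a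
telescoping identity driven by `p_{r+1} ι_λ(r+1) = ι_λ(r) ^ d_r - (1 - p_{r+1})`.
So `λ` is an eigenvalue iff `v_λ` is bounded. As `v_λ(q_{r-1}) = ι_λ(r)`, boundedness forces
`|ι_λ(r)| ≤ 1` for all `r`: once `|ι_λ(r)| > 1`, the recursion at least doubles `|ι_λ| - 1` at
each step. Conversely `|ι_λ| ≤ 1` bounds `v_λ` by `1`, and since `f̃_r(λ) = ι_λ(r) ^ d_r`,
the condition `|ι_λ| ≤ 1` is exactly `λ ∈ E`.
-/

open Filter Finset
open scoped ENNReal Topology ZeroAtInfty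

noncomputable section

namespace AMFC

/-- `q d j = d 0 * d 1 * ... * d j`. -/
def q (d : ℕ → ℕ) (j : ℕ) : ℕ := ∏ i ∈ Finset.range (j + 1), d i

/-- For `j ≥ 1`, `digit d n j = ⌊n / q_{j-1}⌋ mod d_j` is the `j`-th digit of `n`
in the Cantor system of numeration. -/
def digit (d : ℕ → ℕ) (n j : ℕ) : ℕ := (n / q d (j - 1)) % d j

/-- The counter `ζ_n = min { j ≥ 1 : a_j(n) ≠ d_j - 1 }`. -/
def zeta (d : ℕ → ℕ) (n : ℕ) : ℕ := sInf {j | 1 ≤ j ∧ digit d n j ≠ d j - 1}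

open scoped Classical in
/-- The transition probabilities of the stochastic adding machine. -/
def s (d : ℕ → ℕ) (p : ℕ → ℝ) (n m : ℕ) : ℝ :=
  if m = n + 1 then ∏ j ∈ Finset.Icc 1 (zeta d n), p j
  else if m = n then 1 - p 1
  else if h : ∃ r, 1 ≤ r ∧ r + 1 ≤ zeta d n ∧
      n = m + ∑ j ∈ Finset.Icc 1 r, (d j - 1) * q d (j - 1)
    then (1 - p (h.choose + 1)) * ∏ j ∈ Finset.Icc 1 h.choose, p j
  else 0

/-- `f j (z) = ((z - (1 - p j)) / p j) ^ (d j)`. -/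
def f (d : ℕ → ℕ) (p : ℕ → ℝ) (j : ℕ) (z : ℂ) : ℂ :=
  ((z - (1 - (p j : ℂ))) / (p j : ℂ)) ^ d j

/-- `ftil j = f j ∘ ... ∘ f 1`, with `ftil 0 = id`. -/
def ftil (d : ℕ → ℕ) (p : ℕ → ℝ) : ℕ → ℂ → ℂ
  | 0 => id
  | j + 1 => f d p (j + 1) ∘ ftil d p j

/-- The fibered filled Julia set `E = {z : limsup_j |ftil j z| < ∞}`. -/
def E (d : ℕ → ℕ) (p : ℕ → ℝ) : Set ℂ :=
  {z | Filter.limsup (fun j => (‖ftil d p j z‖₊ : ℝ≥0∞)) Filter.atTop < ⊤}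

/-- `ι_λ(r) = (ftil (r-1) λ - (1 - p r)) / p r` for `r ≥ 1`. -/
def iota (d : ℕ → ℕ) (p : ℕ → ℝ) (lam : ℂ) (r : ℕ) : ℂ :=
  (ftil d p (r - 1) lam - (1 - (p r : ℂ))) / (p r : ℂ)

/-- `v_λ(n) = ∏_{r ≥ 1} ι_λ(r) ^ a_r(n)`, a finite product. -/
def vlam (d : ℕ → ℕ) (p : ℕ → ℝ) (lam : ℂ) (n : ℕ) : ℂ :=
  ∏ᶠ r : ℕ, iota d p lam (r + 1) ^ digit d n (r + 1)

/-- The point spectrum of a continuous linear operator. -/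
def pointSpectrum {M : Type*} [NormedAddCommGroup M] [NormedSpace ℂ M]
    (T : M →L[ℂ] M) : Set ℂ :=
  {lam | ∃ v, v ≠ 0 ∧ T v = lam • v}

/-- The residual spectrum: `T - λI` is injective but its range is not dense. -/
def residualSpectrum {M : Type*} [NormedAddCommGroup M] [NormedSpace ℂ M]
    (T : M →L[ℂ] M) : Set ℂ :=
  {lam | Function.Injective ⇑(T - lam • (1 : M →L[ℂ] M)) ∧
    ¬ DenseRange ⇑(T - lam • (1 : M →L[ℂ] M))}

/-- The continuous spectrum: `T - λI` is injective with dense range, but not surjective. -/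
def continuousSpectrum {M : Type*} [NormedAddCommGroup M] [NormedSpace ℂ M]
    (T : M →L[ℂ] M) : Set ℂ :=
  {lam | Function.Injective ⇑(T - lam • (1 : M →L[ℂ] M)) ∧
    DenseRange ⇑(T - lam • (1 : M →L[ℂ] M)) ∧
    Set.range ⇑(T - lam • (1 : M →L[ℂ] M)) ≠ Set.univ}

section

variable {d : ℕ → ℕ} {p : ℕ → ℝ}

structure IsCantorBase (d : ℕ → ℕ) : Prop where
  zero : d 0 = 1
  two_le : ∀ j, 1 ≤ j → 2 ≤ d j

lemma q_succ (j : ℕ) : q d (j + 1) = q d j * d (j + 1) := prod_range_succ d (j + 1)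

lemma q_dvd_q {i j : ℕ} (h : i ≤ j) : q d i ∣ q d j :=
  prod_dvd_prod_of_subset _ _ d (range_subset_range.2 (by omega))

lemma mod_q_succ (n r : ℕ) : n % q d (r + 1) = n % q d r + q d r * digit d n (r + 1) := by
  rw [q_succ, Nat.mod_mul, digit, Nat.add_sub_cancel]

lemma digit_eq_zero_of_lt {n j : ℕ} (h : n < q d (j - 1)) : digit d n j = 0 := by
  simp [digit, Nat.div_eq_of_lt h]

lemma digit_of_lt_zeta {n j : ℕ} (hj : 1 ≤ j) (hjz : j < zeta d n) : digit d n j = d j - 1 := by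
  by_contra h
  exact Nat.notMem_of_lt_sInf hjz ⟨hj, h⟩

lemma digit_eq_of_div_q_eq {m n r j : ℕ} (h : m / q d r = n / q d r)
    (hj : r < j) : digit d m j = digit d n j := by
  obtain ⟨k, hk⟩ := q_dvd_q (d := d) (show r ≤ j - 1 by omega)
  rw [digit, digit, hk, ← Nat.div_div_eq_div_mul, ← Nat.div_div_eq_div_mul, h]

lemma IsCantorBase.q_zero (hd : IsCantorBase d) : q d 0 = 1 := by simp [q, hd.zero]

lemma IsCantorBase.q_pos (hd : IsCantorBase d) (j : ℕ) : 0 < q d j := by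
  induction j with
  | zero => simp [hd.q_zero]
  | succ k ih => rw [q_succ]; exact Nat.mul_pos ih (by have := hd.two_le (k + 1) (by omega); omega)

lemma IsCantorBase.q_strictMono (hd : IsCantorBase d) : StrictMono (q d) := by
  refine strictMono_nat_of_lt_succ fun j => ?_
  rw [q_succ]
  exact lt_mul_right (hd.q_pos j) (hd.two_le (j + 1) (by omega))

lemma IsCantorBase.lt_q_self (hd : IsCantorBase d) (n : ℕ) : n < q d n := by
  have := hd.q_strictMono.add_le_nat n 0
  rw [add_zero, hd.q_zero] at this
  omega

lemma IsCantorBase.digit_lt (hd : IsCantorBase d) (n : ℕ) {j : ℕ} (hj : 1 ≤ j) :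
    digit d n j < d j :=
  Nat.mod_lt _ (by have := hd.two_le j hj; omega)

lemma IsCantorBase.zeta_spec (hd : IsCantorBase d) (n : ℕ) :
    1 ≤ zeta d n ∧ digit d n (zeta d n) ≠ d (zeta d n) - 1 := by
  have hne : {j | 1 ≤ j ∧ digit d n j ≠ d j - 1}.Nonempty := by
    refine ⟨n + 1, by omega, ?_⟩
    rw [digit_eq_zero_of_lt (by simpa using hd.lt_q_self n)]
    have := hd.two_le (n + 1) (by omega)
    omega
  exact Nat.sInf_mem hne

lemma IsCantorBase.one_le_zeta (hd : IsCantorBase d) (n : ℕ) : 1 ≤ zeta d n := (hd.zeta_spec n).1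

lemma IsCantorBase.digit_zeta_add_one_lt (hd : IsCantorBase d) (n : ℕ) :
    digit d n (zeta d n) + 1 < d (zeta d n) := by
  have := hd.digit_lt n (hd.one_le_zeta n)
  have := (hd.zeta_spec n).2
  omega

lemma IsCantorBase.mod_q_of_lt_zeta (hd : IsCantorBase d) {n r : ℕ} (hr : r < zeta d n) :
    n % q d r = q d r - 1 := by
  induction r with
  | zero => simp [hd.q_zero, Nat.mod_one]
  | succ r ih =>
    rw [mod_q_succ, ih (by omega), digit_of_lt_zeta (by omega) hr, q_succ]
    obtain ⟨D, hD⟩ : ∃ D, d (r + 1) = D + 1 := ⟨d (r + 1) - 1, by have := hd.two_le (r + 1); omega⟩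
    rw [hD, Nat.add_sub_cancel, Nat.mul_succ]
    have := hd.q_pos r
    omega

lemma IsCantorBase.mod_q_zeta_add_one_lt (hd : IsCantorBase d) (n : ℕ) :
    n % q d (zeta d n) + 1 < q d (zeta d n) := by
  obtain ⟨k, hk⟩ : ∃ k, zeta d n = k + 1 := ⟨zeta d n - 1, by have := hd.one_le_zeta n; omega⟩
  have hdigit := hd.digit_zeta_add_one_lt n
  rw [hk] at hdigit ⊢
  rw [mod_q_succ, hd.mod_q_of_lt_zeta (by omega), q_succ]
  have := hd.q_pos k
  have := Nat.mul_le_mul_left (q d k) (Nat.succ_le_of_lt hdigit)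
  rw [Nat.mul_succ, Nat.mul_succ] at this
  omega

lemma IsCantorBase.sub_q_eq_q_mul_div (hd : IsCantorBase d) {n r : ℕ} (hr : r < zeta d n) :
    n - (q d r - 1) = q d r * (n / q d r) := by
  have := Nat.div_add_mod n (q d r)
  rw [hd.mod_q_of_lt_zeta hr] at this
  omega

lemma IsCantorBase.succ_eq_q_mul_div (hd : IsCantorBase d) (n : ℕ) :
    n + 1 = q d (zeta d n - 1) * (n / q d (zeta d n - 1) + 1) := by
  have hdiv := Nat.div_add_mod n (q d (zeta d n - 1))
  rw [hd.mod_q_of_lt_zeta (by have := hd.one_le_zeta n; omega)] at hdiv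
  have := hd.q_pos (zeta d n - 1)
  rw [Nat.mul_succ]
  omega

lemma IsCantorBase.succ_div_q_zeta (hd : IsCantorBase d) (n : ℕ) :
    (n + 1) / q d (zeta d n) = n / q d (zeta d n) := by
  have hdiv := Nat.div_add_mod n (q d (zeta d n))
  calc (n + 1) / q d (zeta d n)
      = (q d (zeta d n) * (n / q d (zeta d n)) + (n % q d (zeta d n) + 1)) / q d (zeta d n) := by
        rw [← add_assoc, hdiv]
    _ = n / q d (zeta d n) := by
        rw [Nat.mul_add_div (hd.q_pos _), Nat.div_eq_of_lt (hd.mod_q_zeta_add_one_lt n), add_zero]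

lemma IsCantorBase.digit_eq_zero_of_q_dvd (hd : IsCantorBase d) {m r j : ℕ} (h : q d r ∣ m)
    (hj : 1 ≤ j) (hjr : j ≤ r) : digit d m j = 0 := by
  obtain ⟨t, rfl⟩ := (q_dvd_q hjr).trans h
  obtain ⟨i, rfl⟩ := Nat.exists_eq_add_of_le' hj
  rw [digit, Nat.add_sub_cancel, q_succ, mul_assoc, Nat.mul_div_cancel_left _ (hd.q_pos _),
    Nat.mul_mod_right]

lemma IsCantorBase.digit_succ_of_lt_zeta (hd : IsCantorBase d) {n j : ℕ} (hj : 1 ≤ j)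
    (hjz : j < zeta d n) : digit d (n + 1) j = 0 :=
  hd.digit_eq_zero_of_q_dvd ⟨_, hd.succ_eq_q_mul_div n⟩ hj (by omega)

lemma IsCantorBase.digit_succ_zeta (hd : IsCantorBase d) (n : ℕ) :
    digit d (n + 1) (zeta d n) = digit d n (zeta d n) + 1 := by
  have hdiv : (n + 1) / q d (zeta d n - 1) = n / q d (zeta d n - 1) + 1 := by
    rw [hd.succ_eq_q_mul_div n, Nat.mul_div_cancel_left _ (hd.q_pos _)]
  have := hd.digit_zeta_add_one_lt n
  rw [digit] at this ⊢
  rw [hdiv, Nat.add_mod, Nat.one_mod_eq_one.2 (by omega), Nat.mod_eq_of_lt this, digit]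

lemma IsCantorBase.digit_succ_of_zeta_lt (hd : IsCantorBase d) {n j : ℕ} (hj : zeta d n < j) :
    digit d (n + 1) j = digit d n j :=
  digit_eq_of_div_q_eq (hd.succ_div_q_zeta n) hj

lemma IsCantorBase.digit_sub_of_le (hd : IsCantorBase d) {n r j : ℕ} (hr : r < zeta d n)
    (hj : 1 ≤ j) (hjr : j ≤ r) : digit d (n - (q d r - 1)) j = 0 :=
  hd.digit_eq_zero_of_q_dvd ⟨_, hd.sub_q_eq_q_mul_div hr⟩ hj hjr

lemma IsCantorBase.digit_sub_of_lt (hd : IsCantorBase d) {n r j : ℕ} (hr : r < zeta d n)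
    (hj : r < j) : digit d (n - (q d r - 1)) j = digit d n j := by
  refine digit_eq_of_div_q_eq ?_ hj
  rw [hd.sub_q_eq_q_mul_div hr, Nat.mul_div_cancel_left _ (hd.q_pos _)]

lemma IsCantorBase.one_lt_q (hd : IsCantorBase d) {r : ℕ} (hr : 1 ≤ r) : 1 < q d r :=
  hd.q_zero ▸ hd.q_strictMono hr

lemma IsCantorBase.q_sub_one_le (hd : IsCantorBase d) {n r : ℕ} (hr : r < zeta d n) :
    q d r - 1 ≤ n :=
  hd.mod_q_of_lt_zeta hr ▸ Nat.mod_le n _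

lemma IsCantorBase.sum_Icc_pred_mul_q (hd : IsCantorBase d) (r : ℕ) :
    ∑ j ∈ Icc 1 r, (d j - 1) * q d (j - 1) = q d r - 1 := by
  induction r with
  | zero => simp [hd.q_zero]
  | succ r ih =>
    rw [sum_Icc_succ_top (by omega), ih, Nat.add_sub_cancel, q_succ]
    obtain ⟨D, hD⟩ : ∃ D, d (r + 1) = D + 1 := ⟨d (r + 1) - 1, by have := hd.two_le (r + 1); omega⟩
    rw [hD, Nat.add_sub_cancel, Nat.mul_succ, mul_comm D]
    have := hd.q_pos r
    omega

lemma s_succ (n : ℕ) : s d p n (n + 1) = ∏ j ∈ Icc 1 (zeta d n), p j := by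
  rw [s, if_pos rfl]

lemma s_self (n : ℕ) : s d p n n = 1 - p 1 := by
  rw [s, if_neg (by omega), if_pos rfl]

lemma IsCantorBase.s_sub (hd : IsCantorBase d) {n r : ℕ} (hr : 1 ≤ r) (hrz : r + 1 ≤ zeta d n) :
    s d p n (n - (q d r - 1)) = (1 - p (r + 1)) * ∏ j ∈ Icc 1 r, p j := by
  have hq := hd.one_lt_q hr
  have hle := hd.q_sub_one_le (show r < zeta d n by omega)
  rw [s, if_neg (by omega), if_neg (by omega)]
  have hex : ∃ r', 1 ≤ r' ∧ r' + 1 ≤ zeta d n ∧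
      n = n - (q d r - 1) + ∑ j ∈ Icc 1 r', (d j - 1) * q d (j - 1) :=
    ⟨r, hr, hrz, by rw [hd.sum_Icc_pred_mul_q]; omega⟩
  rw [dif_pos hex]
  obtain ⟨hr', -, hn⟩ := hex.choose_spec
  rw [hd.sum_Icc_pred_mul_q] at hn
  have := hd.one_lt_q hr'
  rw [hd.q_strictMono.injective (show q d hex.choose = q d r by omega)]

lemma IsCantorBase.s_eq_zero (hd : IsCantorBase d) {n m : ℕ} (hm₁ : m ≠ n + 1) (hm₂ : m ≠ n)
    (hm₃ : ∀ r, 1 ≤ r → r + 1 ≤ zeta d n → m ≠ n - (q d r - 1)) : s d p n m = 0 := by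
  rw [s, if_neg hm₁, if_neg hm₂, dif_neg]
  rintro ⟨r, hr, hrz, hn⟩
  rw [hd.sum_Icc_pred_mul_q] at hn
  exact hm₃ r hr hrz (by omega)

lemma IsCantorBase.tsum_s_mul (hd : IsCantorBase d) (v : ℕ → ℂ) (n : ℕ) :
    ∑' m, (s d p n m : ℂ) * v m =
      (∏ j ∈ Icc 1 (zeta d n), (p j : ℂ)) * v (n + 1) + (1 - (p 1 : ℂ)) * v n +
        ∑ r ∈ Icc 1 (zeta d n - 1),
          (1 - (p (r + 1) : ℂ)) * (∏ j ∈ Icc 1 r, (p j : ℂ)) * v (n - (q d r - 1)) := by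
  have hjump : ∀ r ∈ Icc 1 (zeta d n - 1), 1 < q d r ∧ q d r - 1 ≤ n := fun r hr => by
    rw [mem_Icc] at hr
    exact ⟨hd.one_lt_q hr.1, hd.q_sub_one_le (by omega)⟩
  have hinj : Set.InjOn (fun r => n - (q d r - 1)) (Icc 1 (zeta d n - 1)) := by
    intro r hr r' hr' h
    have := hjump r hr
    have := hjump r' hr'
    exact hd.q_strictMono.injective (by simp only at h; omega)
  have hn : n ∉ (Icc 1 (zeta d n - 1)).image fun r => n - (q d r - 1) := by
    simp only [mem_image, not_exists, not_and]
    intro r hr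
    have := hjump r hr
    omega
  have hsucc : n + 1 ∉ insert n ((Icc 1 (zeta d n - 1)).image fun r => n - (q d r - 1)) := by
    simp only [mem_insert, mem_image, not_or, not_exists, not_and]
    exact ⟨by omega, fun r _ => by omega⟩
  rw [tsum_eq_sum (s := insert (n + 1) (insert n ((Icc 1 (zeta d n - 1)).image
      fun r => n - (q d r - 1)))), sum_insert hsucc, sum_insert hn, sum_image hinj, s_succ, s_self]
  · push_cast
    rw [add_assoc]
    congr 2
    refine sum_congr rfl fun r hr => ?_
    rw [mem_Icc] at hr
    rw [hd.s_sub hr.1 (by omega)]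
    push_cast
    ring
  · intro m hm
    simp only [mem_insert, mem_image, mem_Icc, not_or, not_exists, not_and] at hm
    rw [hd.s_eq_zero hm.1 hm.2.1 fun r hr hrz h => hm.2.2 r ⟨hr, by omega⟩ h.symm]
    simp

lemma ftil_succ (lam : ℂ) (k : ℕ) : ftil d p (k + 1) lam = iota d p lam (k + 1) ^ d (k + 1) := rfl

lemma p_mul_iota_succ (hp0 : ∀ j, 1 ≤ j → p j ≠ 0) (lam : ℂ) (k : ℕ) :
    (p (k + 1) : ℂ) * iota d p lam (k + 1) = ftil d p k lam - (1 - (p (k + 1) : ℂ)) := by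
  have : (p (k + 1) : ℂ) ≠ 0 := by exact_mod_cast hp0 (k + 1) (by omega)
  rw [iota, Nat.add_sub_cancel]
  field_simp

lemma IsCantorBase.lam_mul_prod_iota_pow (hd : IsCantorBase d) (hp0 : ∀ j, 1 ≤ j → p j ≠ 0)
    (lam : ℂ) (k : ℕ) :
    lam * ∏ j ∈ Ioc 0 k, iota d p lam j ^ (d j - 1) =
      (1 - (p 1 : ℂ)) * ∏ j ∈ Ioc 0 k, iota d p lam j ^ (d j - 1) +
        (∏ j ∈ Icc 1 (k + 1), (p j : ℂ)) * iota d p lam (k + 1) +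
        ∑ r ∈ Icc 1 k, (1 - (p (r + 1) : ℂ)) * (∏ j ∈ Icc 1 r, (p j : ℂ)) *
          ∏ j ∈ Ioc r k, iota d p lam j ^ (d j - 1) := by
  induction k with
  | zero =>
    have := p_mul_iota_succ (d := d) hp0 lam 0
    simp only [ftil, id] at this
    simp only [Ioc_self, prod_empty, Icc_self, prod_singleton, Icc_eq_empty_of_lt zero_lt_one,
      sum_empty]
    linear_combination -this
  | succ k ih =>
    set X := iota d p lam (k + 1) ^ (d (k + 1) - 1)
    have hX : iota d p lam (k + 1) * X =
        (p (k + 2) : ℂ) * iota d p lam (k + 2) + (1 - (p (k + 2) : ℂ)) := by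
      rw [← pow_succ', Nat.sub_add_cancel (by have := hd.two_le (k + 1); omega),
        ← ftil_succ, p_mul_iota_succ hp0]
      ring
    have hsum : ∑ r ∈ Icc 1 k, (1 - (p (r + 1) : ℂ)) * (∏ j ∈ Icc 1 r, (p j : ℂ)) *
          ∏ j ∈ Ioc r (k + 1), iota d p lam j ^ (d j - 1) =
        (∑ r ∈ Icc 1 k, (1 - (p (r + 1) : ℂ)) * (∏ j ∈ Icc 1 r, (p j : ℂ)) *
          ∏ j ∈ Ioc r k, iota d p lam j ^ (d j - 1)) * X := by
      rw [sum_mul]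
      refine sum_congr rfl fun r hr => ?_
      rw [prod_Ioc_succ_top (mem_Icc.1 hr).2]
      ring
    rw [prod_Ioc_succ_top (Nat.zero_le k), sum_Icc_succ_top (by omega), hsum,
      prod_Icc_succ_top (by omega : 1 ≤ k + 2), Ioc_self, prod_empty]
    linear_combination X * ih + (∏ j ∈ Icc 1 (k + 1), (p j : ℂ)) * hX

/-- `S v = λ v` row by row; `v` need not be bounded. -/
def IsEigenvector (d : ℕ → ℕ) (p : ℕ → ℝ) (lam : ℂ) (v : ℕ → ℂ) : Prop :=
  ∀ n, ∑' m, (s d p n m : ℂ) * v m = lam * v n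

lemma IsEigenvector.const_mul {lam : ℂ} {v : ℕ → ℂ} (hv : IsEigenvector d p lam v) (c : ℂ) :
    IsEigenvector d p lam fun n => c * v n := by
  intro n
  simp_rw [mul_left_comm _ c]
  rw [tsum_mul_left, hv n, mul_left_comm]

lemma IsCantorBase.eq_of_isEigenvector (hd : IsCantorBase d) (hp0 : ∀ j, 1 ≤ j → p j ≠ 0)
    {lam : ℂ} {u w : ℕ → ℂ} (hu : IsEigenvector d p lam u) (hw : IsEigenvector d p lam w)
    (h0 : u 0 = w 0) : u = w := by
  funext n
  induction n using Nat.strong_induction_on with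
  | _ n ih =>
    rcases n with _ | n
    · exact h0
    have hun := hu n
    have hwn := hw n
    rw [hd.tsum_s_mul] at hun hwn
    have hjumps : ∑ r ∈ Icc 1 (zeta d n - 1),
        (1 - (p (r + 1) : ℂ)) * (∏ j ∈ Icc 1 r, (p j : ℂ)) * u (n - (q d r - 1)) =
        ∑ r ∈ Icc 1 (zeta d n - 1),
          (1 - (p (r + 1) : ℂ)) * (∏ j ∈ Icc 1 r, (p j : ℂ)) * w (n - (q d r - 1)) :=
      sum_congr rfl fun r _ => by rw [ih _ (by omega)]
    have hP : ∏ j ∈ Icc 1 (zeta d n), (p j : ℂ) ≠ 0 :=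
      prod_ne_zero_iff.2 fun j hj => by exact_mod_cast hp0 j (mem_Icc.1 hj).1
    rw [hjumps, ih n (by omega)] at hun
    exact mul_left_cancel₀ hP (by linear_combination hun - hwn)

lemma vlam_zero (lam : ℂ) : vlam d p lam 0 = 1 := by
  simp [vlam, digit]

lemma IsCantorBase.vlam_eq_prod (hd : IsCantorBase d) (lam : ℂ) {n N : ℕ} (hn : n < q d N) :
    vlam d p lam n = ∏ j ∈ Ioc 0 N, iota d p lam j ^ digit d n j := by
  rw [vlam, finprod_eq_prod_of_mulSupport_subset (s := range N), range_eq_Ico,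
    prod_Ico_add' (fun j => iota d p lam j ^ digit d n j), Ico_add_one_add_one_eq_Ioc]
  intro r hr
  rw [coe_range, Set.mem_Iio]
  by_contra! hNr
  exact hr (by
    dsimp only
    rw [digit_eq_zero_of_lt (hn.trans_le (hd.q_strictMono.monotone hNr)), pow_zero])

lemma IsCantorBase.vlam_eq_of_digits (hd : IsCantorBase d) (lam : ℂ) {x r k N : ℕ} (w : ℕ → ℕ)
    (hrk : r ≤ k) (hkN : k < N) (hx : x < q d N) (hlow : ∀ j ∈ Ioc 0 r, digit d x j = 0)
    (hmid : ∀ j ∈ Ioc r k, digit d x j = d j - 1)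
    (hhigh : ∀ j ∈ Ioc (k + 1) N, digit d x j = w j) :
    vlam d p lam x = (∏ j ∈ Ioc r k, iota d p lam j ^ (d j - 1)) *
      iota d p lam (k + 1) ^ digit d x (k + 1) * ∏ j ∈ Ioc (k + 1) N, iota d p lam j ^ w j := by
  have hmid' : ∏ j ∈ Ioc r k, iota d p lam j ^ digit d x j =
      ∏ j ∈ Ioc r k, iota d p lam j ^ (d j - 1) := prod_congr rfl fun j hj => by rw [hmid j hj]
  have hhigh' : ∏ j ∈ Ioc (k + 1) N, iota d p lam j ^ digit d x j =
      ∏ j ∈ Ioc (k + 1) N, iota d p lam j ^ w j := prod_congr rfl fun j hj => by rw [hhigh j hj]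
  rw [hd.vlam_eq_prod lam hx, ← prod_Ioc_consecutive _ (Nat.zero_le r) (hrk.trans hkN.le),
    ← prod_Ioc_consecutive _ hrk hkN.le, ← prod_Ioc_consecutive _ (by omega : k ≤ k + 1) hkN,
    Nat.Ioc_succ_singleton, prod_singleton, prod_eq_one fun j hj => by rw [hlow j hj, pow_zero],
    hmid', hhigh', one_mul, mul_assoc]

lemma IsCantorBase.vlam_q (hd : IsCantorBase d) (lam : ℂ) (k : ℕ) :
    vlam d p lam (q d k) = iota d p lam (k + 1) := by
  have hdigit : digit d (q d k) (k + 1) = 1 := by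
    rw [digit, Nat.add_sub_cancel, Nat.div_self (hd.q_pos k),
      Nat.mod_eq_of_lt (hd.two_le (k + 1) (by omega))]
  rw [hd.vlam_eq_of_digits lam 0 le_rfl k.lt_succ_self (hd.q_strictMono k.lt_succ_self)
    (fun j hj => hd.digit_eq_zero_of_q_dvd dvd_rfl (mem_Ioc.1 hj).1 (mem_Ioc.1 hj).2)
    (by simp) (by simp), hdigit]
  simp

lemma IsCantorBase.norm_vlam_le_one (hd : IsCantorBase d) {lam : ℂ}
    (h : ∀ k, ‖iota d p lam (k + 1)‖ ≤ 1) (n : ℕ) : ‖vlam d p lam n‖ ≤ 1 := by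
  rw [hd.vlam_eq_prod lam (hd.lt_q_self n), norm_prod]
  refine prod_le_one (fun _ _ => norm_nonneg _) fun j hj => ?_
  obtain ⟨k, rfl⟩ := Nat.exists_eq_add_of_le' (mem_Ioc.1 hj).1
  rw [norm_pow]
  exact pow_le_one₀ (norm_nonneg _) (h k)

lemma IsCantorBase.isEigenvector_vlam (hd : IsCantorBase d) (hp0 : ∀ j, 1 ≤ j → p j ≠ 0) (lam : ℂ) :
    IsEigenvector d p lam (vlam d p lam) := by
  intro n
  obtain ⟨k, hk⟩ : ∃ k, zeta d n = k + 1 := ⟨_, (Nat.sub_add_cancel (hd.one_le_zeta n)).symm⟩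
  have hkN : k < n + 1 := by
    have := hd.q_sub_one_le (n := n) (r := k) (by omega)
    have := hd.lt_q_self k
    omega
  have hN := hd.lt_q_self (n + 1)
  set W := ∏ j ∈ Ioc (k + 1) (n + 1), iota d p lam j ^ digit d n j
  have hvn : vlam d p lam n = (∏ j ∈ Ioc 0 k, iota d p lam j ^ (d j - 1)) *
      iota d p lam (k + 1) ^ digit d n (k + 1) * W :=
    hd.vlam_eq_of_digits lam _ (Nat.zero_le k) hkN (by omega) (by simp)
      (fun j hj => digit_of_lt_zeta (mem_Ioc.1 hj).1 (by grind)) fun _ _ => rfl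
  have hvsucc : vlam d p lam (n + 1) = iota d p lam (k + 1) ^ (digit d n (k + 1) + 1) * W := by
    have hdigit := hd.digit_succ_zeta n
    rw [hk] at hdigit
    rw [hd.vlam_eq_of_digits lam _ le_rfl hkN hN
      (fun j hj => hd.digit_succ_of_lt_zeta (mem_Ioc.1 hj).1 (by grind)) (by simp)
      fun j hj => hd.digit_succ_of_zeta_lt (by grind), hdigit, Ioc_self, prod_empty, one_mul]
  have hvsub : ∀ r ∈ Icc 1 k, vlam d p lam (n - (q d r - 1)) =
      (∏ j ∈ Ioc r k, iota d p lam j ^ (d j - 1)) *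
        (iota d p lam (k + 1) ^ digit d n (k + 1) * W) := fun r hr => by
    have hrz : r < zeta d n := by grind
    rw [hd.vlam_eq_of_digits lam _ (mem_Icc.1 hr).2 hkN (by omega)
      (fun j hj => hd.digit_sub_of_le hrz (mem_Ioc.1 hj).1 (mem_Ioc.1 hj).2)
      (fun j hj => by
        rw [hd.digit_sub_of_lt hrz (mem_Ioc.1 hj).1, digit_of_lt_zeta (by grind) (by grind)])
      fun j hj => hd.digit_sub_of_lt hrz (by grind), hd.digit_sub_of_lt hrz (by omega), mul_assoc]
  rw [hd.tsum_s_mul, hk, Nat.add_sub_cancel, hvsucc, hvn, sum_congr rfl fun r hr => by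
    rw [hvsub r hr, ← mul_assoc], ← sum_mul]
  linear_combination -(iota d p lam (k + 1) ^ digit d n (k + 1) * W) *
    hd.lam_mul_prod_iota_pow hp0 lam k

lemma IsCantorBase.two_mul_norm_iota_sub_one_le (hd : IsCantorBase d)
    (hp : ∀ j, 1 ≤ j → p j ∈ Set.Ioc (0 : ℝ) 1) {lam : ℂ} {k : ℕ}
    (h : 1 ≤ ‖iota d p lam (k + 1)‖) :
    2 * (‖iota d p lam (k + 1)‖ - 1) ≤ ‖iota d p lam (k + 2)‖ - 1 := by
  obtain ⟨hP0, hP1⟩ := hp (k + 2) (by omega)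
  set x := ‖iota d p lam (k + 1)‖
  set y := ‖iota d p lam (k + 2)‖
  have hstep : x ^ d (k + 1) - (1 - p (k + 2)) ≤ p (k + 2) * y := by
    have heq : iota d p lam (k + 1) ^ d (k + 1) - (1 - (p (k + 2) : ℂ)) =
        (p (k + 2) : ℂ) * iota d p lam (k + 2) :=
      (p_mul_iota_succ (fun j hj => (hp j hj).1.ne') lam (k + 1)).symm
    have hnorm := norm_sub_norm_le (iota d p lam (k + 1) ^ d (k + 1)) (1 - (p (k + 2) : ℂ))
    rwa [heq, norm_mul, norm_pow, Complex.norm_real, Real.norm_of_nonneg hP0.le,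
      ← Complex.ofReal_one, ← Complex.ofReal_sub, Complex.norm_real,
      Real.norm_of_nonneg (by linarith)] at hnorm
  have hsq : x ^ 2 ≤ x ^ d (k + 1) := pow_le_pow_right₀ h (hd.two_le (k + 1) (by omega))
  nlinarith

lemma IsCantorBase.two_pow_mul_le_norm_iota (hd : IsCantorBase d)
    (hp : ∀ j, 1 ≤ j → p j ∈ Set.Ioc (0 : ℝ) 1) {lam : ℂ} {k : ℕ}
    (h : 1 ≤ ‖iota d p lam (k + 1)‖) (m : ℕ) :
    2 ^ m * (‖iota d p lam (k + 1)‖ - 1) ≤ ‖iota d p lam (m + (k + 1))‖ - 1 := by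
  induction m with
  | zero => simp
  | succ m ih =>
    have hstep := hd.two_mul_norm_iota_sub_one_le hp (k := m + k)
      (by rw [add_assoc]; nlinarith [pow_pos (two_pos (α := ℝ)) m])
    rw [show m + k + 1 = m + (k + 1) by omega, show m + k + 2 = m + 1 + (k + 1) by omega] at hstep
    rw [pow_succ]
    linarith

lemma IsCantorBase.tendsto_norm_iota (hd : IsCantorBase d)
    (hp : ∀ j, 1 ≤ j → p j ∈ Set.Ioc (0 : ℝ) 1) {lam : ℂ} {k : ℕ}
    (h : 1 < ‖iota d p lam (k + 1)‖) : Tendsto (fun j => ‖iota d p lam j‖) atTop atTop := by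
  rw [← tendsto_add_atTop_iff_nat (k + 1)]
  refine tendsto_atTop_mono (fun m => ?_) (tendsto_atTop_add_const_right _ 1
    ((tendsto_pow_atTop_atTop_of_one_lt one_lt_two).atTop_mul_const (sub_pos.2 h)))
  linarith [hd.two_pow_mul_le_norm_iota hp h.le m]

lemma IsCantorBase.norm_iota_le_one_of_bounded (hd : IsCantorBase d)
    (hp : ∀ j, 1 ≤ j → p j ∈ Set.Ioc (0 : ℝ) 1) {lam : ℂ} {C : ℝ}
    (hC : ∀ k, ‖iota d p lam (k + 1)‖ ≤ C) (k : ℕ) : ‖iota d p lam (k + 1)‖ ≤ 1 := by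
  by_contra! h
  obtain ⟨j, hj⟩ := ((hd.tendsto_norm_iota hp h).eventually_gt_atTop C).and
    (eventually_ge_atTop 1) |>.exists
  obtain ⟨i, rfl⟩ := Nat.exists_eq_add_of_le' hj.2
  exact (hC i).not_gt hj.1

lemma IsCantorBase.mem_E_iff (hd : IsCantorBase d) (hp : ∀ j, 1 ≤ j → p j ∈ Set.Ioc (0 : ℝ) 1)
    (lam : ℂ) :
    lam ∈ E d p ↔ ∀ k, ‖iota d p lam (k + 1)‖ ≤ 1 := by
  rw [E, Set.mem_ofPred_eq]
  constructor
  · intro hE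
    by_contra! h
    obtain ⟨k, hk⟩ := h
    have hftil : Tendsto (fun j => ‖ftil d p j lam‖) atTop atTop := by
      refine tendsto_atTop_mono' _ ?_ (hd.tendsto_norm_iota hp hk)
      filter_upwards [(hd.tendsto_norm_iota hp hk).eventually_ge_atTop 1, eventually_ge_atTop 1]
        with j hj hj1
      obtain ⟨i, rfl⟩ := Nat.exists_eq_add_of_le' hj1
      rw [ftil_succ, norm_pow]
      exact le_self_pow₀ hj (by have := hd.two_le (i + 1) (by omega); omega)
    have htop : Tendsto (fun j => (‖ftil d p j lam‖₊ : ℝ≥0∞)) atTop (𝓝 ⊤) := by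
      convert ENNReal.tendsto_ofReal_atTop.comp hftil using 1
      funext j
      exact ((ofReal_norm _).trans (enorm_eq_nnnorm _)).symm
    exact hE.ne htop.limsup_eq
  · intro h
    refine lt_of_le_of_lt (limsup_le_of_le (by isBoundedDefault) ?_) ENNReal.one_lt_top
    filter_upwards [eventually_ge_atTop 1] with j hj
    obtain ⟨i, rfl⟩ := Nat.exists_eq_add_of_le' hj
    rw [ftil_succ, ← enorm_eq_nnnorm, ← ofReal_norm, norm_pow, ENNReal.ofReal_le_one]
    exact pow_le_one₀ (norm_nonneg _) (h i)

end

/-- the point spectrum of `S` on `l^∞` equals `E`: there is a nonzero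
bounded eigenvector for `λ` iff `λ ∈ E`. -/
theorem stmt4 (d : ℕ → ℕ) (p : ℕ → ℝ)
    (hd0 : d 0 = 1) (hd : ∀ j, 1 ≤ j → 2 ≤ d j)
    (hp : ∀ j, 1 ≤ j → p j ∈ Set.Ioc (0 : ℝ) 1) (lam : ℂ) :
    (∃ v : ℕ → ℂ, (∃ C : ℝ, ∀ n, ‖v n‖ ≤ C) ∧ v ≠ 0 ∧
        ∀ n, ∑' m : ℕ, (s d p n m : ℂ) * v m = lam * v n) ↔ lam ∈ E d p := by
  have hbase : IsCantorBase d := ⟨hd0, hd⟩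
  have hp0 : ∀ j, 1 ≤ j → p j ≠ 0 := fun j hj => (hp j hj).1.ne'
  have hvlam := hbase.isEigenvector_vlam hp0 lam
  rw [hbase.mem_E_iff hp]
  constructor
  · rintro ⟨v, ⟨C, hC⟩, hv0, hv⟩
    have hv_eq : v = fun n => v 0 * vlam d p lam n :=
      hbase.eq_of_isEigenvector hp0 hv (hvlam.const_mul (v 0)) (by simp [vlam_zero])
    have hv00 : v 0 ≠ 0 := fun h => hv0 <| funext fun n => by simp [congrFun hv_eq n, h]
    refine hbase.norm_iota_le_one_of_bounded hp (C := C / ‖v 0‖) fun k => ?_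
    rw [le_div_iff₀ (norm_pos_iff.2 hv00), ← hbase.vlam_q, mul_comm, ← norm_mul, ← congrFun hv_eq]
    exact hC _
  · intro h
    exact ⟨vlam d p lam, ⟨1, hbase.norm_vlam_le_one h⟩,
      fun h0 => by simpa [vlam_zero] using congrFun h0 0, hvlam⟩

end AMFC
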